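/- Let G be a graph admitting a star decomposition (T,χ) with central node r such that: (1) χ(r) is either a clique of size at most k or a k-atom (a subgraph with no clique separation of order at most k), (2) every adhesion σ(t) = χ(t) ∩ χ(r) has size at most k, (3) every leaf bag has size at most q, and (4) (T,χ) is connectivity-sensitive. Then G is (2^k·q, k)-clique-unbreakable, i.e., every clique separation (A,B) of G of order at most k satisfies |A| ≤ 2^k·q or |B| ≤ 2^k·q. -/

import Mathlib

open Finset

variable {V : Type*} [Fintype V] [DecidableEq V]

/-- A separation of a graph: a pair of vertex sets covering all vertices with no edge
between the two strict sides. Its order is `(A ∩ B).card`. -/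
def IsSep (G : SimpleGraph V) (A B : Finset V) : Prop :=
  A ∪ B = Finset.univ ∧
    ∀ a ∈ A, a ∉ B → ∀ b ∈ B, b ∉ A → ¬ G.Adj a b

/-- The `k`-improved graph `G^⟨k⟩`: `x` and `y` are adjacent iff they are distinct and no
separation of `G` of order at most `k` separates them (i.e. `μ_G(x,y) > k`). -/
def ImprovedGraph (G : SimpleGraph V) (k : ℕ) : SimpleGraph V where
  Adj x y := x ≠ y ∧ ∀ A B : Finset V, IsSep G A B → (A ∩ B).card ≤ k →
    ¬ ((x ∈ A ∧ x ∉ B ∧ y ∈ B ∧ y ∉ A) ∨ (y ∈ A ∧ y ∉ B ∧ x ∈ B ∧ x ∉ A))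
  symm := by
    constructor
    rintro x y ⟨hxy, h⟩
    exact ⟨hxy.symm, fun A B hs ho hc => h A B hs ho hc.symm⟩
  loopless := ⟨fun x h => h.1 rfl⟩

/-- `S` is `(q,k)`-unbreakable in `G`: every separation of order at most `k` has at most `q`
vertices of `S` on one of its sides. -/
def UnbreakableSet (G : SimpleGraph V) (S : Finset V) (q k : ℕ) : Prop :=
  ∀ A B : Finset V, IsSep G A B → (A ∩ B).card ≤ k →
    (A ∩ S).card ≤ q ∨ (B ∩ S).card ≤ q

/-- A clique separation: both strict sides nonempty and the separator is a clique. -/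
def IsCliqueSep (G : SimpleGraph V) (A B : Finset V) : Prop :=
  IsSep G A B ∧ (A \ B).Nonempty ∧ (B \ A).Nonempty ∧ G.IsClique (↑(A ∩ B) : Set V)

/-- `y` is reachable from `x` in `G − W`. -/
def AvoidReach (G : SimpleGraph V) (W : Finset V) (x y : V) : Prop :=
  ∃ p : G.Walk x y, ∀ v ∈ p.support, v ∉ W

/-- `W` is an `X`-`Y` separator: no vertex of `Y \ W` is reachable from `X \ W` in `G − W`. -/
def IsSepSet (G : SimpleGraph V) (W X Y : Finset V) : Prop :=
  ∀ x ∈ X, ∀ y ∈ Y, ¬ AvoidReach G W x y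

/-- `R_{G−W}(X \ W)`: the set of vertices reachable from `X \ W` in `G − W`. -/
def ReachSet (G : SimpleGraph V) (W X : Finset V) : Set V :=
  {y | ∃ x ∈ X, AvoidReach G W x y}

/-- An important `X`-`Y` separator. -/
def IsImpSep (G : SimpleGraph V) (X Y W : Finset V) : Prop :=
  IsSepSet G W X Y ∧
  (∀ W' ⊆ W, W' ≠ W → ¬ IsSepSet G W' X Y) ∧
  ∀ W' : Finset V, IsSepSet G W' X Y → W'.card ≤ W.card →
    ¬ (ReachSet G W X ⊂ ReachSet G W' X)

/-- A `k`-important `X`-`Y` separator. -/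
def IsKImpSep (G : SimpleGraph V) (k : ℕ) (X Y W : Finset V) : Prop :=
  IsImpSep G X Y W ∧ W.card ≤ k ∧
  ∀ W' : Finset V, IsImpSep G X Y W' → W'.card ≤ k → W' ≠ W →
    ¬ (ReachSet G W X ⊆ ReachSet G W' X)

/-- The `k`-important separator extension of `D`. -/
def KImpExt (G : SimpleGraph V) (D : Finset V) (k : ℕ) : Set V :=
  {u | (∃ v, v ≠ u ∧ ∃ S : Finset V, IsKImpSep G k {v} D S ∧ u ∈ S) ∨
       (({u} : Finset V).card ≤ k ∧ IsSepSet G {u} {u} D ∧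
        ∀ S : Finset V, IsSepSet G S {u} D → S.card ≤ k → S = {u})}

/-- `C` is (the vertex set of) a connected component of `G − A`. -/
def IsCompAvoiding (G : SimpleGraph V) (A : Set V) (C : Set V) : Prop :=
  ∃ x, x ∉ A ∧ C = {y | ∃ p : G.Walk x y, ∀ v ∈ p.support, v ∉ A}

/-- `C` is (the vertex set of) a connected component of the induced subgraph `G[S]`. -/
def IsCompWithin (G : SimpleGraph V) (S : Set V) (C : Set V) : Prop :=
  ∃ x ∈ S, C = {y | ∃ p : G.Walk x y, ∀ v ∈ p.support, v ∈ S}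

/-- The (open) neighborhood of a vertex set `C` in `G`. -/
def nbhdSet (G : SimpleGraph V) (C : Set V) : Set V :=
  {v | v ∉ C ∧ ∃ c ∈ C, G.Adj v c}

/-- A connectivity-sensitive star decomposition of `G`, given by its central bag and its
set of leaf bags. -/
structure ConnSensStar (G : SimpleGraph V) where
  center : Finset V
  leaves : Finset (Finset V)
  cover : ∀ v : V, v ∈ center ∨ ∃ L ∈ leaves, v ∈ L
  edges : ∀ x y : V, G.Adj x y →
    (x ∈ center ∧ y ∈ center) ∨ ∃ L ∈ leaves, x ∈ L ∧ y ∈ L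
  inter : ∀ L ∈ leaves, ∀ L' ∈ leaves, L ≠ L' → ∀ v ∈ L, v ∈ L' → v ∈ center
  adh_distinct : ∀ L ∈ leaves, ∀ L' ∈ leaves, L ∩ center = L' ∩ center → L = L'
  comp_nbhd : ∀ L ∈ leaves, ∀ C : Set V,
    IsCompWithin G ((↑L : Set V) \ (↑center : Set V)) C → nbhdSet G C = ↑(L ∩ center)

/-- `(A,B)` is an `S`-stable separation of `G`. -/
def IsStableSep (G : SimpleGraph V) (S : Finset V) (A B : Finset V) : Prop :=
  IsSep G A B ∧ ∃ SL SR : Finset V, SL ∪ SR = S ∧ SL ∩ SR = ∅ ∧ SL ⊆ A ∧ SR ⊆ B ∧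
    ∀ A' B' : Finset V, IsSep G A' B' → SL ⊆ A' → SR ⊆ B' → (A ∩ B).card ≤ (A' ∩ B').card

/-- A `Λ`-boundaried graph: a graph together with an injective partial assignment of
labels to (boundary) vertices. -/
structure BGraph (Λ : Type*) (V : Type*) where
  G : SimpleGraph V
  bd : Λ → Option V
  inj : ∀ l l' v, bd l = some v → bd l' = some v → l = l'

/-- `K` (with embeddings `f₁`, `f₂`) is the gluing `H₁ ⊕ H₂` of two boundaried graphs:
vertices of equal label are identified, and an edge is present iff it is present in
(at least) one of the two graphs. -/
def IsGluing {Λ V₁ V₂ W : Type*} (H₁ : BGraph Λ V₁) (H₂ : BGraph Λ V₂)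
    (K : SimpleGraph W) (f₁ : V₁ → W) (f₂ : V₂ → W) : Prop :=
  Function.Injective f₁ ∧ Function.Injective f₂ ∧
  (∀ w : W, (∃ a, f₁ a = w) ∨ (∃ b, f₂ b = w)) ∧
  (∀ a b, f₁ a = f₂ b ↔ ∃ l, H₁.bd l = some a ∧ H₂.bd l = some b) ∧
  (∀ x y : W, K.Adj x y ↔
    (∃ a b, f₁ a = x ∧ f₁ b = y ∧ H₁.G.Adj a b) ∨
    (∃ a b, f₂ a = x ∧ f₂ b = y ∧ H₂.G.Adj a b))

/-- The weak cut signature value of the boundaried graph `H` at `(A', B')` is at most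
`n − |A' ∩ B'|`: there is a separation of order at most `n` whose sides contain the
boundary vertices labeled by `A'` and `B'`, respectively. -/
def WeakSigLE {Λ : Type*} {V : Type*} [Fintype V] [DecidableEq V]
    (H : BGraph Λ V) (A' B' : Finset Λ) (n : ℕ) : Prop :=
  ∃ A B : Finset V, IsSep H.G A B ∧
    (∀ l ∈ A', ∀ v, H.bd l = some v → v ∈ A) ∧
    (∀ l ∈ B', ∀ v, H.bd l = some v → v ∈ B) ∧ (A ∩ B).card ≤ n

/-- Two `Λ`-boundaried graphs have the same weak cut signature. -/
def SameWeakSig {Λ : Type*} [Fintype Λ] [DecidableEq Λ] {V₁ V₂ : Type*}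
    [Fintype V₁] [DecidableEq V₁] [Fintype V₂] [DecidableEq V₂]
    (H₁ : BGraph Λ V₁) (H₂ : BGraph Λ V₂) : Prop :=
  ∀ A' B' : Finset Λ, A' ∪ B' = Finset.univ →
    ∀ n : ℕ, WeakSigLE H₁ A' B' n ↔ WeakSigLE H₂ A' B' n

/-!
A clique of `G`, and likewise a `k`-atom, cannot be split by a clique separation `(A, B)` of
order at most `k`, so the central bag lies on one side, say in `A`. Let `S = A ∩ B`. A leaf
meeting `B \ A` in a vertex `v` either contains a vertex of `S` outside the center, which then
lies in no other leaf, or has `S ∩ L` inside the center; in the latter case the component of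
`v` in `G[L \ center]` stays in `B \ A`, and connectivity-sensitivity forces the whole adhesion
of `L` into `S`. Either way `L ↦ L ∩ S` is injective on these leaves, so there are at most
`2^|S|` of them. Since adhesions are distinct, at most one of them is empty, so these leaves
contribute at most `2^|S| (q - 1) + 1` vertices outside the center, and
`|B| ≤ |S| + 2^|S| (q - 1) + 1 ≤ 2^|S| q`.
-/

namespace IsSep

variable {G : SimpleGraph V} {A B : Finset V}

theorem symm (h : IsSep G A B) : IsSep G B A :=
  ⟨by rw [union_comm]; exact h.1, fun a ha haA b hb hbB hab => h.2 b hb hbB a ha haA hab.symm⟩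

theorem mem_or_mem (h : IsSep G A B) (v : V) : v ∈ A ∨ v ∈ B :=
  mem_union.1 (h.1 ▸ mem_univ v)

theorem mem_right_of_adj (h : IsSep G A B) {a b : V} (ha : a ∈ A) (hb : b ∈ B \ A)
    (hab : G.Adj a b) : a ∈ B := by
  by_contra haB
  exact h.2 a ha haB b (mem_sdiff.1 hb).1 (mem_sdiff.1 hb).2 hab

theorem mem_sdiff_of_walk (h : IsSep G A B) {x y : V} (p : G.Walk x y) (hx : x ∈ B \ A)
    (hp : ∀ u ∈ p.support, u ∉ A ∩ B) : y ∈ B \ A := by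
  induction p with
  | nil => exact hx
  | @cons x w y hxw p ih =>
    refine ih ?_ fun u hu => hp u (List.mem_cons_of_mem _ hu)
    have hwS : w ∉ A ∩ B := hp w (List.mem_cons_of_mem _ p.start_mem_support)
    by_cases hwA : w ∈ A
    · exact absurd (mem_inter.2 ⟨hwA, h.mem_right_of_adj hwA hx hxw.symm⟩) hwS
    · exact mem_sdiff.2 ⟨(h.mem_or_mem w).resolve_left hwA, hwA⟩

theorem subset_or_subset_of_isClique (h : IsSep G A B) {K : Finset V}
    (hK : G.IsClique (K : Set V)) : K ⊆ A ∨ K ⊆ B := by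
  by_contra! hKAB
  obtain ⟨x, hxK, hxA⟩ := not_subset.1 hKAB.1
  obtain ⟨y, hyK, hyB⟩ := not_subset.1 hKAB.2
  have hxB := (h.mem_or_mem x).resolve_left hxA
  have hyA := (h.mem_or_mem y).resolve_right hyB
  exact h.2 y hyA hyB x hxB hxA (hK hyK hxK fun hyx => hxA (hyx ▸ hyA))

end IsSep

theorem IsCliqueSep.subset_or_subset_of_atom {G : SimpleGraph V} {A B : Finset V} {k : ℕ}
    (h : IsCliqueSep G A B) (hk : (A ∩ B).card ≤ k) {C : Finset V}
    (hC : ∀ A' B' : Finset (↑C : Set V),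
      ¬ (IsCliqueSep (G.induce (↑C : Set V)) A' B' ∧ (A' ∩ B').card ≤ k)) :
    C ⊆ A ∨ C ⊆ B := by
  by_contra! hCAB
  obtain ⟨x, hxC, hxA⟩ := not_subset.1 hCAB.1
  obtain ⟨y, hyC, hyB⟩ := not_subset.1 hCAB.2
  set A' : Finset (↑C : Set V) := univ.filter fun v => v.1 ∈ A
  set B' : Finset (↑C : Set V) := univ.filter fun v => v.1 ∈ B
  have hS : ∀ v ∈ A' ∩ B', v.1 ∈ A ∩ B := fun v hv => by
    simp only [A', B', mem_inter, mem_filter, mem_univ, true_and] at hv ⊢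
    exact hv
  have hsep : IsSep (G.induce (↑C : Set V)) A' B' := by
    refine ⟨eq_univ_of_forall fun v => ?_, fun a ha haB b hb hbA hab => ?_⟩
    · simpa [A', B'] using h.1.mem_or_mem v.1
    · simp only [A', B', mem_filter, mem_univ, true_and] at ha haB hb hbA
      exact h.1.2 a ha haB b hb hbA hab
  refine hC A' B' ⟨⟨hsep, ⟨⟨y, hyC⟩, ?_⟩, ⟨⟨x, hxC⟩, ?_⟩, ?_⟩, ?_⟩
  · simpa [A', B'] using ⟨(h.1.mem_or_mem y).resolve_right hyB, hyB⟩
  · simpa [A', B'] using ⟨(h.1.mem_or_mem x).resolve_left hxA, hxA⟩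
  · exact fun u hu v hv huv => h.2.2.2 (hS u hu) (hS v hv) (Subtype.coe_ne_coe.2 huv)
  · exact (card_le_card_of_injOn Subtype.val hS Subtype.val_injective.injOn).trans hk

namespace ConnSensStar

variable {G : SimpleGraph V} (T : ConnSensStar G) {A B : Finset V}

theorem inter_center_eq_of_isSep (hsep : IsSep G A B) (hcA : T.center ⊆ A) {L : Finset V}
    (hL : L ∈ T.leaves) (hLB : (L ∩ (B \ A)).Nonempty) (hLS : L ∩ (A ∩ B) ⊆ T.center) :
    L ∩ T.center = L ∩ (A ∩ B) := by
  refine subset_antisymm (fun u hu => ?_) fun u hu => mem_inter.2 ⟨(mem_inter.1 hu).1, hLS hu⟩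
  obtain ⟨v, hv⟩ := hLB
  obtain ⟨hvL, hvBA⟩ := mem_inter.1 hv
  have hvc : v ∉ T.center := fun hvc => (mem_sdiff.1 hvBA).2 (hcA hvc)
  have hu' : u ∈ nbhdSet G _ := (T.comp_nbhd L hL _ ⟨v, ⟨hvL, hvc⟩, rfl⟩) ▸ mem_coe.2 hu
  obtain ⟨-, c, ⟨p, hp⟩, huc⟩ := hu'
  -- the component of `v` in `G[L \ center]` avoids `S`, hence stays in `B \ A`
  have hcBA : c ∈ B \ A := hsep.mem_sdiff_of_walk p hvBA fun w hw hwS =>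
    (hp w hw).2 (hLS (mem_inter.2 ⟨(hp w hw).1, hwS⟩))
  have huA : u ∈ A := hcA (mem_inter.1 hu).2
  exact mem_inter.2 ⟨(mem_inter.1 hu).1, mem_inter.2 ⟨huA, hsep.mem_right_of_adj huA hcBA huc⟩⟩

theorem eq_of_inter_eq (hsep : IsSep G A B) (hcA : T.center ⊆ A) {L L' : Finset V}
    (hL : L ∈ T.leaves) (hL' : L' ∈ T.leaves) (hLB : (L ∩ (B \ A)).Nonempty)
    (hL'B : (L' ∩ (B \ A)).Nonempty) (h : L ∩ (A ∩ B) = L' ∩ (A ∩ B)) : L = L' := by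
  by_cases hLS : L ∩ (A ∩ B) ⊆ T.center
  · have hL'S : L' ∩ (A ∩ B) ⊆ T.center := h ▸ hLS
    refine T.adh_distinct L hL L' hL' ?_
    rw [T.inter_center_eq_of_isSep hsep hcA hL hLB hLS,
      T.inter_center_eq_of_isSep hsep hcA hL' hL'B hL'S, h]
  · obtain ⟨u, huLS, huc⟩ := not_subset.1 hLS
    by_contra hne
    exact huc (T.inter L hL L' hL' hne u (mem_inter.1 huLS).1 (mem_inter.1 (h ▸ huLS)).1)

theorem card_leaves_meeting_le (hsep : IsSep G A B) (hcA : T.center ⊆ A) :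
    (T.leaves.filter fun L => (L ∩ (B \ A)).Nonempty).card ≤ 2 ^ (A ∩ B).card := by
  rw [← card_powerset]
  refine card_le_card_of_injOn (· ∩ (A ∩ B)) (fun L _ => mem_powerset.2 inter_subset_right) ?_
  intro L hL L' hL' h
  rw [coe_filter] at hL hL'
  exact T.eq_of_inter_eq hsep hcA hL.1 hL'.1 hL.2 hL'.2 h

omit [Fintype V] in
theorem sum_card_sdiff_center_le {q : ℕ} (hleaf : ∀ L ∈ T.leaves, L.card ≤ q)
    {𝒢 : Finset (Finset V)} (h𝒢 : 𝒢 ⊆ T.leaves) :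
    ∑ L ∈ 𝒢, (L \ T.center).card ≤ 𝒢.card * (q - 1) + 1 := by
  have hle : ∀ L ∈ 𝒢, (L \ T.center).card ≤ (q - 1) + if L ∩ T.center = ∅ then 1 else 0 := by
    intro L hL
    have hLq := hleaf L (h𝒢 hL)
    have hsplit := card_sdiff_add_card_inter L T.center
    split_ifs with hadh
    · omega
    · have := card_pos.2 (nonempty_iff_ne_empty.2 hadh)
      omega
  have hempty : (𝒢.filter fun L => L ∩ T.center = ∅).card ≤ 1 :=
    card_le_one.2 fun L hL L' hL' => T.adh_distinct L (h𝒢 (mem_filter.1 hL).1) L'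
      (h𝒢 (mem_filter.1 hL').1) ((mem_filter.1 hL).2.trans (mem_filter.1 hL').2.symm)
  calc ∑ L ∈ 𝒢, (L \ T.center).card
      ≤ ∑ L ∈ 𝒢, ((q - 1) + if L ∩ T.center = ∅ then 1 else 0) := sum_le_sum hle
    _ = 𝒢.card * (q - 1) + (𝒢.filter fun L => L ∩ T.center = ∅).card := by
      rw [sum_add_distrib, sum_const, smul_eq_mul, sum_boole, Nat.cast_id]
    _ ≤ 𝒢.card * (q - 1) + 1 := by omega

theorem card_le_of_center_subset {q : ℕ} (hleaf : ∀ L ∈ T.leaves, L.card ≤ q)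
    (hsep : IsSep G A B) (hBA : (B \ A).Nonempty) (hcA : T.center ⊆ A) :
    B.card ≤ 2 ^ (A ∩ B).card * q := by
  set 𝒯 := T.leaves.filter fun L => (L ∩ (B \ A)).Nonempty
  have hcover : B \ A ⊆ 𝒯.biUnion (· \ T.center) := by
    intro v hv
    have hvc : v ∉ T.center := fun hvc => (mem_sdiff.1 hv).2 (hcA hvc)
    obtain ⟨L, hL, hvL⟩ := (T.cover v).resolve_left hvc
    exact mem_biUnion.2 ⟨L, mem_filter.2 ⟨hL, v, mem_inter.2 ⟨hvL, hv⟩⟩, mem_sdiff.2 ⟨hvL, hvc⟩⟩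
  have hq : 1 ≤ q := by
    obtain ⟨v, hv⟩ := hBA
    obtain ⟨L, hL, hvL⟩ := mem_biUnion.1 (hcover hv)
    exact (card_pos.2 ⟨v, (mem_sdiff.1 hvL).1⟩).trans_le (hleaf L (mem_filter.1 hL).1)
  have hBA_card : (B \ A).card ≤ 2 ^ (A ∩ B).card * (q - 1) + 1 :=
    calc (B \ A).card ≤ ∑ L ∈ 𝒯, (L \ T.center).card := (card_le_card hcover).trans card_biUnion_le
      _ ≤ 𝒯.card * (q - 1) + 1 := T.sum_card_sdiff_center_le hleaf (filter_subset _ _)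
      _ ≤ 2 ^ (A ∩ B).card * (q - 1) + 1 := by
        gcongr
        exact T.card_leaves_meeting_le hsep hcA
  have hB : B.card = (A ∩ B).card + (B \ A).card := by
    rw [inter_comm, add_comm, card_sdiff_add_card_inter]
  have hS : (A ∩ B).card + 1 ≤ 2 ^ (A ∩ B).card := Nat.lt_two_pow_self
  obtain ⟨r, rfl⟩ := Nat.exists_eq_add_of_le' hq
  rw [Nat.add_sub_cancel] at hBA_card
  rw [Nat.mul_succ]
  omega

end ConnSensStar

theorem star_decomp_clique_unbreakable_general (G : SimpleGraph V) (k q : ℕ)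
    (T : ConnSensStar G)
    (hcenter : (T.center.card ≤ k ∧ G.IsClique (↑T.center : Set V)) ∨
      ∀ A B : Finset (↑T.center : Set V),
        ¬ (IsCliqueSep (G.induce (↑T.center : Set V)) A B ∧ (A ∩ B).card ≤ k))
    (hleaf : ∀ L ∈ T.leaves, L.card ≤ q) :
    ∀ A B : Finset V, IsCliqueSep G A B → (A ∩ B).card ≤ k →
      A.card ≤ 2 ^ k * q ∨ B.card ≤ 2 ^ k * q := by
  intro A B hAB hk
  have hpow : 2 ^ (A ∩ B).card * q ≤ 2 ^ k * q :=
    Nat.mul_le_mul_right q (Nat.pow_le_pow_right two_pos hk)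
  have hcenter_side : T.center ⊆ A ∨ T.center ⊆ B := by
    rcases hcenter with ⟨-, hclique⟩ | hatom
    · exact hAB.1.subset_or_subset_of_isClique hclique
    · exact hAB.subset_or_subset_of_atom hk hatom
  rcases hcenter_side with hcA | hcB
  · exact Or.inr ((T.card_le_of_center_subset hleaf hAB.1 hAB.2.2.1 hcA).trans hpow)
  · refine Or.inl ((T.card_le_of_center_subset hleaf hAB.1.symm hAB.2.1 hcB).trans ?_)
    rwa [inter_comm]

/-- if `G` has a connectivity-sensitive star decomposition whose central
bag is a clique of size at most `k` or a `k`-atom, with adhesions of size at most `k`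
and leaf bags of size at most `q`, then `G` is `(2^k·q, k)`-clique-unbreakable. -/
theorem star_decomp_clique_unbreakable (G : SimpleGraph V) (k q : ℕ)
    (T : ConnSensStar G)
    (hcenter : (T.center.card ≤ k ∧ G.IsClique (↑T.center : Set V)) ∨
      ∀ A B : Finset (↑T.center : Set V),
        ¬ (IsCliqueSep (G.induce (↑T.center : Set V)) A B ∧ (A ∩ B).card ≤ k))
    (hadh : ∀ L ∈ T.leaves, (L ∩ T.center).card ≤ k)
    (hleaf : ∀ L ∈ T.leaves, L.card ≤ q) :
    ∀ A B : Finset V, IsCliqueSep G A B → (A ∩ B).card ≤ k →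
      A.card ≤ 2 ^ k * q ∨ B.card ≤ 2 ^ k * q :=
  star_decomp_clique_unbreakable_general G k q T hcenter hleaf
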